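/- arXiv:2105.01776 — 3 statements merged into one kernel-verified Lean document; each statement's English description precedes it below -/
import Mathlib

section
/- If I is an ideal on a regular uncountable cardinal κ extending the bounded ideal, then the ineffability operator applied to I yields a normal ideal on κ: the collection I(I) of sets A ⊆ κ such that some κ-list restricted to A has no homogeneous subset of A in I⁺ is a normal ideal on κ. -/
open Set

/-- `C` is unbounded in `δ`. -/
def UnbIn (δ : Ordinal) (C : Set Ordinal) : Prop :=
  ∀ β < δ, ∃ γ ∈ C, β ≤ γ ∧ γ < δ

/-- `a` is an `A`-list: `a α ⊆ α` for all `α ∈ A`. -/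
def IsList (A : Set Ordinal) (a : Ordinal → Set Ordinal) : Prop :=
  ∀ α ∈ A, a α ⊆ Set.Iio α

/-- `H` is homogeneous for the list `a`. -/
def Homog (a : Ordinal → Set Ordinal) (H : Set Ordinal) : Prop :=
  ∀ α ∈ H, ∀ β ∈ H, α < β → a α = a β ∩ Set.Iio α

/-- `κ` is (the ordinal of) a regular uncountable cardinal. -/
def RegUncountable (κ : Ordinal) : Prop :=
  κ.card.ord = κ ∧ κ.card.IsRegular ∧ Cardinal.aleph0 < κ.card

/-- An ideal on `κ`: extends the bounded ideal, closed under subsets and finite unions. -/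
structure IsIdealOn (κ : Ordinal) (I : Set (Set Ordinal)) : Prop where
  subset_iio : ∀ A ∈ I, A ⊆ Set.Iio κ
  bounded_mem : ∀ A, A ⊆ Set.Iio κ → ¬ UnbIn κ A → A ∈ I
  mono : ∀ A ∈ I, ∀ B, B ⊆ A → B ∈ I
  union_mem : ∀ A ∈ I, ∀ B ∈ I, A ∪ B ∈ I

/-- `f` is regressive on `A`. -/
def Regressive (A : Set Ordinal) (f : Ordinal → Ordinal) : Prop :=
  ∀ α ∈ A, α ≠ 0 → f α < α

/-- The ineffability operator `𝓘(I)`: the collection of `A ⊆ κ` such that some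
`κ`-list (restricted to `A`) has no homogeneous subset of `A` in `I⁺`. -/
def IneffIdeal (κ : Ordinal) (I : Set (Set Ordinal)) : Set (Set Ordinal) :=
  {A | A ⊆ Set.Iio κ ∧
    ¬ ∀ a : Ordinal → Set Ordinal, (∀ α, a α ⊆ Set.Iio α) →
      ∃ H, H ⊆ A ∧ H ∉ I ∧ Homog a H}

/-! If every fibre of a regressive `f` on `A` lies in `𝓘(I)`, so does `A`. Coding `f α` by the
even ordinal `2 * f α` and the list witnessing that the fibre of `f α` is small by odd ordinals
merges the lists of all fibres into one. At ordinals closed under `γ ↦ 2 * γ + 1` the code of `α`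
stays below `α`, so a homogeneous set for the merged list is homogeneous for `α ↦ {f α}`, which
makes `f` constant on it, and then for the list of that fibre. The other ordinals are pressed down
by `α ↦ α / 2`, whose fibres are bounded. -/

open Ordinal

lemma two_mul_ne_two_mul_add_one (a b : Ordinal) : 2 * a ≠ 2 * b + 1 := by
  intro h
  have h2 := congrArg (· % 2) h
  simp [Ordinal.mul_add_mod_self, Ordinal.mod_eq_of_lt] at h2

section RegUncountable

variable {κ : Ordinal}

lemma RegUncountable.omega0_le (hκ : RegUncountable κ) : ω ≤ κ := by
  rw [← hκ.1]
  exact Cardinal.omega0_le_ord.2 hκ.2.2.le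

lemma RegUncountable.two_mul_add_two_lt (hκ : RegUncountable κ) {γ : Ordinal} (hγ : γ < κ) :
    2 * γ + 2 < κ := by
  have h2 : (2 : Ordinal) < κ := by
    simpa using (natCast_lt_omega0 2).trans_le hκ.omega0_le
  obtain ⟨hord, -, hℵ₀⟩ := hκ
  rw [← hord] at hγ h2 ⊢
  exact isPrincipal_add_ord hℵ₀.le (isPrincipal_mul_ord hℵ₀.le h2 hγ) h2

end RegUncountable

lemma IsIdealOn.mem_of_subset_Iio {κ δ : Ordinal} {I : Set (Set Ordinal)} (hI : IsIdealOn κ I)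
    {S : Set Ordinal} (hS : S ⊆ Iio δ) (hδ : δ < κ) : S ∈ I :=
  hI.bounded_mem S (hS.trans (Iio_subset_Iio hδ.le)) fun hunb =>
    let ⟨_, hγS, hδγ, _⟩ := hunb δ hδ
    (hS hγS).not_ge hδγ

section Homog

variable {d e : Ordinal → Set Ordinal} {H : Set Ordinal}

lemma Homog.mono (hd : Homog d H) {H' : Set Ordinal} (hH' : H' ⊆ H) : Homog d H' :=
  fun α hα β hβ => hd α (hH' hα) β (hH' hβ)

lemma Homog.congr (hd : Homog d H) (hde : EqOn d e H) : Homog e H := by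
  intro α hα β hβ hαβ
  rw [← hde hα, ← hde hβ]
  exact hd α hα β hβ hαβ

lemma Homog.preimage (hd : Homog d H) {φ : Ordinal → Ordinal}
    (hφ : ∀ α ∈ H, ∀ γ, φ γ < α ↔ γ < α) : Homog (fun α => φ ⁻¹' d α) H := by
  intro α hα β hβ hαβ
  ext γ
  simp only [hd α hα β hβ hαβ, mem_preimage, mem_inter_iff, mem_Iio, hφ α hα]

lemma Homog.exists_const_of_eq_singleton (hd : Homog d H) {g : Ordinal → Ordinal}
    (hg : ∀ α ∈ H, d α = {g α}) : ∃ δ, ∀ α ∈ H, g α = δ := by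
  rcases H.eq_empty_or_nonempty with rfl | ⟨α₀, hα₀⟩
  · exact ⟨0, fun _ h => h.elim⟩
  have hlt : ∀ α ∈ H, ∀ β ∈ H, α < β → g α = g β := fun α hα β hβ hαβ => by
    have h := hd α hα β hβ hαβ
    rw [hg α hα, hg β hβ] at h
    exact (h.le rfl).1
  refine ⟨g α₀, fun α hα => ?_⟩
  rcases lt_trichotomy α α₀ with h | rfl | h
  exacts [hlt α hα α₀ hα₀ h, rfl, (hlt α₀ hα₀ α hα h).symm]

end Homog

section IneffIdeal

variable {κ : Ordinal} {I : Set (Set Ordinal)} {X : Set Ordinal}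

lemma mem_ineffIdeal_iff : X ∈ IneffIdeal κ I ↔ X ⊆ Iio κ ∧
    ∃ a : Ordinal → Set Ordinal, (∀ α, a α ⊆ Iio α) ∧ ∀ H ⊆ X, Homog a H → H ∈ I := by
  simp only [IneffIdeal, mem_ofPred_eq, not_forall, exists_prop, not_exists, not_and, not_imp_not]

lemma IsIdealOn.ineffIdeal (hI : IsIdealOn κ I) : IsIdealOn κ (IneffIdeal κ I) where
  subset_iio _ hA := hA.1
  bounded_mem A hA hbdd := mem_ineffIdeal_iff.2
    ⟨hA, fun _ => ∅, fun _ => empty_subset _,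
      fun H hHA _ => hI.mono A (hI.bounded_mem A hA hbdd) H hHA⟩
  mono A hA B hBA := by
    obtain ⟨hA, a, ha, hAa⟩ := mem_ineffIdeal_iff.1 hA
    exact mem_ineffIdeal_iff.2 ⟨hBA.trans hA, a, ha, fun H hHB => hAa H (hHB.trans hBA)⟩
  union_mem A hA B hB := by
    classical
    obtain ⟨hA, a, ha, hAa⟩ := mem_ineffIdeal_iff.1 hA
    obtain ⟨hB, b, hb, hBb⟩ := mem_ineffIdeal_iff.1 hB
    refine mem_ineffIdeal_iff.2
      ⟨union_subset hA hB, A.piecewise a b, fun α => ?_, fun H hH hhom => ?_⟩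
    · by_cases hα : α ∈ A <;> simp [hα, ha α, hb α]
    have hHA : H ∩ A ∈ I := hAa _ inter_subset_right <|
      (hhom.mono inter_subset_left).congr fun α hα => piecewise_eq_of_mem _ _ _ hα.2
    have hHB : H \ A ∈ I := hBb _ (fun α hα => (hH hα.1).resolve_left hα.2) <|
      (hhom.mono sdiff_subset).congr fun α hα => piecewise_eq_of_notMem _ _ _ hα.2
    simpa only [inter_union_sdiff] using hI.union_mem _ hHA _ hHB

lemma mem_ineffIdeal_of_fibers_mem (hI : IsIdealOn κ I) (hX : X ⊆ Iio κ)
    {g : Ordinal → Ordinal} (hg : ∀ α ∈ X, g α < α) (hfib : ∀ γ, {α ∈ X | g α = γ} ∈ I) :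
    X ∈ IneffIdeal κ I := by
  refine mem_ineffIdeal_iff.2
    ⟨hX, fun α => {g α} ∩ Iio α, fun _ => inter_subset_right, fun H hHX hH => ?_⟩
  obtain ⟨δ, hδ⟩ := hH.exists_const_of_eq_singleton fun α hα =>
    inter_eq_left.2 (singleton_subset_iff.2 (hg α (hHX hα)))
  exact hI.mono _ (hfib δ) H fun α hα => ⟨hHX hα, hδ α hα⟩

end IneffIdeal

def twoMulAddOneClosed : Set Ordinal := {α | ∀ γ < α, 2 * γ + 1 < α}

section Coding

variable {α γ : Ordinal}

lemma two_mul_add_one_lt_iff_of_mem_twoMulAddOneClosed (hα : α ∈ twoMulAddOneClosed) :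
    2 * γ + 1 < α ↔ γ < α :=
  ⟨((le_mul_right γ two_pos).trans le_self_add).trans_lt, hα γ⟩

lemma two_mul_lt_iff_of_mem_twoMulAddOneClosed (hα : α ∈ twoMulAddOneClosed) :
    2 * γ < α ↔ γ < α :=
  ⟨(le_mul_right γ two_pos).trans_lt, fun h => le_self_add.trans_lt (hα γ h)⟩

lemma div_two_lt_of_notMem_twoMulAddOneClosed (hα : α ∉ twoMulAddOneClosed) : α / 2 < α := by
  simp only [twoMulAddOneClosed, mem_ofPred_eq, not_forall, not_lt] at hα
  obtain ⟨γ, hγα, hαγ⟩ := hα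
  have : α / 2 < γ + 1 := (lt_mul_iff_div_lt two_ne_zero).1 <| by
    rw [mul_add_one]
    exact hαγ.trans_lt ((add_lt_add_iff_left _).2 one_lt_two)
  exact (Order.lt_add_one_iff.1 this).trans_lt hγα

def codedList (f : Ordinal → Ordinal) (a : Ordinal → Ordinal → Set Ordinal) (α : Ordinal) :
    Set Ordinal :=
  insert (2 * f α) ((fun γ => 2 * γ + 1) '' a (f α) α) ∩ Iio α

variable {f : Ordinal → Ordinal} {a : Ordinal → Ordinal → Set Ordinal}

lemma preimage_two_mul_codedList (hα : α ∈ twoMulAddOneClosed) (hfα : f α < α) :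
    (2 * ·) ⁻¹' codedList f a α = {f α} := by
  ext γ
  simp only [codedList, mem_preimage, mem_inter_iff, mem_insert_iff, mem_image, mem_Iio,
    mem_singleton_iff]
  constructor
  · rintro ⟨h | ⟨_, -, h⟩, -⟩
    · simpa only [mul_eq_mul_left_iff, OfNat.ofNat_ne_zero, or_false] using h
    · exact absurd h.symm (two_mul_ne_two_mul_add_one _ _)
  · rintro rfl
    exact ⟨Or.inl rfl, (two_mul_lt_iff_of_mem_twoMulAddOneClosed hα).2 hfα⟩

lemma preimage_two_mul_add_one_codedList (hα : α ∈ twoMulAddOneClosed)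
    (ha : a (f α) α ⊆ Iio α) :
    (fun γ => 2 * γ + 1) ⁻¹' codedList f a α = a (f α) α := by
  ext γ
  simp only [codedList, mem_preimage, mem_inter_iff, mem_insert_iff, mem_image, mem_Iio]
  constructor
  · rintro ⟨h | ⟨γ', hγ', h⟩, -⟩
    · exact absurd h.symm (two_mul_ne_two_mul_add_one _ _)
    · obtain rfl : γ' = γ := by
        simpa only [Order.add_one_inj, mul_eq_mul_left_iff, OfNat.ofNat_ne_zero, or_false] using h
      exact hγ'
  · intro hγ
    exact ⟨Or.inr ⟨γ, hγ, rfl⟩,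
      (two_mul_add_one_lt_iff_of_mem_twoMulAddOneClosed hα).2 (ha hγ)⟩

end Coding

section Normality

variable {κ : Ordinal} {I : Set (Set Ordinal)} {X : Set Ordinal}

lemma mem_ineffIdeal_of_fibers_mem_ineffIdeal (hX : X ⊆ Iio κ) (hXC : X ⊆ twoMulAddOneClosed)
    {f : Ordinal → Ordinal} (hf : ∀ α ∈ X, f α < α)
    (hfib : ∀ β, {α ∈ X | f α = β} ∈ IneffIdeal κ I) : X ∈ IneffIdeal κ I := by
  choose _ a ha hfa using fun β => mem_ineffIdeal_iff.1 (hfib β)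
  refine mem_ineffIdeal_iff.2
    ⟨hX, codedList f a, fun _ => inter_subset_right, fun H hHX hH => ?_⟩
  have hHC : ∀ α ∈ H, α ∈ twoMulAddOneClosed := fun α hα => hXC (hHX hα)
  have hHeven := hH.preimage fun α hα _ =>
    two_mul_lt_iff_of_mem_twoMulAddOneClosed (hHC α hα)
  have hHodd := hH.preimage fun α hα _ =>
    two_mul_add_one_lt_iff_of_mem_twoMulAddOneClosed (hHC α hα)
  obtain ⟨δ, hδ⟩ := hHeven.exists_const_of_eq_singleton fun α hα =>
    preimage_two_mul_codedList (hHC α hα) (hf α (hHX hα))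
  have hHδ : Homog (a δ) H := hHodd.congr fun α hα => by
    simp only [preimage_two_mul_add_one_codedList (hHC α hα) (ha _ α), hδ α hα]
  exact hfa δ H (fun α hα => ⟨hHX hα, hδ α hα⟩) hHδ

lemma RegUncountable.diff_twoMulAddOneClosed_mem_ineffIdeal (hκ : RegUncountable κ)
    (hI : IsIdealOn κ I) (hX : X ⊆ Iio κ) : X \ twoMulAddOneClosed ∈ IneffIdeal κ I := by
  refine mem_ineffIdeal_of_fibers_mem hI (sdiff_subset.trans hX)
    (fun α hα => div_two_lt_of_notMem_twoMulAddOneClosed hα.2) fun γ => ?_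
  rcases lt_or_ge γ κ with hγ | hγ
  · refine hI.mem_of_subset_Iio (fun α hα => ?_) (hκ.two_mul_add_two_lt hγ)
    rw [← hα.2]
    exact lt_mul_div_add α two_ne_zero
  · refine hI.mem_of_subset_Iio (δ := 0) (fun α hα => ?_) (omega0_pos.trans_le hκ.omega0_le)
    have hα2 : α / 2 < κ := (div_le_of_le_mul (le_mul_right α two_pos)).trans_lt (hX hα.1.1)
    exact absurd (hα.2 ▸ hα2) hγ.not_gt

end Normality

theorem ineffIdeal_isNormalIdeal_general (κ : Ordinal) (hκ : RegUncountable κ)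
    (I : Set (Set Ordinal)) (hI : IsIdealOn κ I) :
    IsIdealOn κ (IneffIdeal κ I) ∧
      (∀ A, A ⊆ Set.Iio κ → A ∉ IneffIdeal κ I →
        ∀ f : Ordinal → Ordinal, Regressive A f →
          ∃ B β, B ⊆ A ∧ B ∉ IneffIdeal κ I ∧ ∀ α ∈ B, f α = β) := by
  have hJ := hI.ineffIdeal
  refine ⟨hJ, fun A hA hApos f hf => ?_⟩
  by_contra! hsmall
  have hfib : ∀ β, {α ∈ A | f α = β} ∈ IneffIdeal κ I := fun β => by
    by_contra hβ
    obtain ⟨α, hα, hne⟩ := hsmall _ β (fun _ h => h.1) hβ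
    exact hne hα.2
  have hclosed : (A ∩ twoMulAddOneClosed) \ {0} ∈ IneffIdeal κ I :=
    mem_ineffIdeal_of_fibers_mem_ineffIdeal (fun α hα => hA hα.1.1) (fun α hα => hα.1.2)
      (fun α hα => hf α hα.1.1 hα.2) fun β =>
        hJ.mono _ (hfib β) _ fun α hα => ⟨hα.1.1.1, hα.2⟩
  have hnotClosed := hκ.diff_twoMulAddOneClosed_mem_ineffIdeal hI hA
  have hzero : {0} ∈ IneffIdeal κ I :=
    hJ.mem_of_subset_Iio (δ := 1) (by simp) (one_lt_omega0.trans_le hκ.omega0_le)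
  refine hApos (hJ.mono _ (hJ.union_mem _ (hJ.union_mem _ hclosed _ hnotClosed) _ hzero) A ?_)
  intro α hα
  by_cases hC : α ∈ twoMulAddOneClosed <;> by_cases h0 : α = 0 <;> simp [hα, hC, h0]

/-- Baumgartner: the ineffability operator applied to any ideal on a regular
uncountable cardinal `κ` yields a normal ideal on `κ`. -/
theorem ineffIdeal_isNormalIdeal (κ : Ordinal) (hκ : RegUncountable κ)
    (I : Set (Set Ordinal)) (hI : IsIdealOn κ I) (hproper : Set.Iio κ ∉ I) :
    IsIdealOn κ (IneffIdeal κ I) ∧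
      (∀ A, A ⊆ Set.Iio κ → A ∉ IneffIdeal κ I →
        ∀ f : Ordinal → Ordinal, Regressive A f →
          ∃ B β, B ⊆ A ∧ B ∉ IneffIdeal κ I ∧ ∀ α ∈ B, f α = β) :=
  ineffIdeal_isNormalIdeal_general κ hκ I hI
end

section
/- If S is a subtle subset of a regular uncountable cardinal κ, then the set of inaccessible cardinals below κ intersects S; in fact the set of non-inaccessible ordinals below κ, intersected with S, is not subtle, i.e., the inaccessibles below κ lie in the subtle filter. -/
/-!
A non-inaccessible `α > ω` either satisfies `μ < α ≤ 2 ^ μ` for an infinite cardinal `μ` (take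
`μ = |α|` if `α` is not a cardinal; otherwise `α` is regular but not a strong limit), or it is a
singular cardinal. In the first case let `a α` consist of `μ` and a code of `α` by a subset of `μ`,
injective in `α`; in the second, of `cf α` and a cofinal subset of `α` of order type `cf α`.
For `ω < α < β` the coherence `a α = a β ∩ α` is impossible: two codes of the first kind must share
`μ` and then coincide, forcing `α = β`; two of the second kind share `cf α = cf β`, and then the
cofinal set of `α` is a proper initial segment of that of `β`, of size `< cf β = cf α`. A marker `0`
separates the two kinds. So this one list defeats subtlety of the non-inaccessibles on the club
`(ω, κ)`, and a subtle `S` without inaccessibles would be such a set.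
-/

open Set

/-- `C` is a club (closed unbounded) subset of `κ`. -/
def IsClubIn (κ : Ordinal) (C : Set Ordinal) : Prop :=
  C ⊆ Set.Iio κ ∧ UnbIn κ C ∧ ∀ α < κ, α ≠ 0 → UnbIn α C → α ∈ C

/-- `S ⊆ κ` is subtle: every `S`-list and club admit a coherent pair. -/
def Subtle (κ : Ordinal) (S : Set Ordinal) : Prop :=
  S ⊆ Set.Iio κ ∧ ∀ a, IsList S a → ∀ C, IsClubIn κ C →
    ∃ α ∈ S ∩ C, ∃ β ∈ S ∩ C, α < β ∧ a α = a β ∩ Set.Iio α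

/-- `α` is (the ordinal of) a strongly inaccessible cardinal. -/
def OrdInaccessible (α : Ordinal) : Prop :=
  α.card.ord = α ∧ α.card.IsInaccessible

open Cardinal Ordinal Order

universe u

theorem IsLeast.eq_of_eq_inter_Iio {α : Type*} [LinearOrder α] {A B : Set α} {a b c : α}
    (ha : IsLeast A a) (hb : IsLeast B b) (h : A = B ∩ Iio c) : a = b := by
  have haB : a ∈ B ∩ Iio c := h ▸ ha.1
  exact le_antisymm (ha.2 (h ▸ ⟨hb.1, (hb.2 haB.1).trans_lt haB.2⟩)) (hb.2 haB.1)

theorem Set.eq_inter_of_insert_eq_insert_inter {α : Type*} {a : α} {s t u : Set α}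
    (hs : a ∉ s) (ht : a ∉ t) (h : insert a s = insert a t ∩ u) : s = t ∩ u := by
  ext x
  by_cases hx : x = a
  · subst hx
    simp [hs, ht]
  · simpa [hx] using Set.ext_iff.1 h x

theorem RegUncountable.omega0_lt {κ : Ordinal} (hκ : RegUncountable κ) : ω < κ := by
  rw [← hκ.1, ← ord_aleph0, ord_lt_ord]
  exact hκ.2.2

theorem RegUncountable.isSuccLimit {κ : Ordinal} (hκ : RegUncountable κ) : IsSuccLimit κ :=
  hκ.1 ▸ isSuccLimit_ord hκ.2.2.le

theorem isClubIn_Ioo {δ κ : Ordinal} (hκ : IsSuccLimit κ) (hδ : δ < κ) : IsClubIn κ (Ioo δ κ) := by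
  refine ⟨fun _ hx => hx.2, fun β hβ => ?_, fun α hακ hα0 hunb => ?_⟩
  · have hlt : max β (succ δ) < κ := max_lt hβ (hκ.succ_lt hδ)
    exact ⟨_, ⟨(lt_succ δ).trans_le (le_max_right _ _), hlt⟩, le_max_left _ _, hlt⟩
  · obtain ⟨γ, hγ, -, hγα⟩ := hunb 0 (pos_iff_ne_zero.2 hα0)
    exact ⟨hγ.1.trans hγα, hακ⟩

theorem exists_injOn_Iic_two_power {μ : Cardinal.{u}} (hμ : ℵ₀ ≤ μ) :
    ∃ k : Ordinal.{u} → Set Ordinal.{u},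
      InjOn k (Iic (2 ^ μ : Cardinal).ord) ∧ ∀ α, k α ⊆ Iio μ.ord := by
  have hcard : #(Iic (2 ^ μ : Cardinal).ord) ≤ #(Set (Iio μ.ord)) := by
    rw [← Iio_succ, succ_eq_add_one, Cardinal.mk_Iio_ordinal, mk_set, Cardinal.mk_Iio_ordinal,
      card_add_one, card_ord, card_ord, add_one_eq (hμ.trans (cantor μ).le), lift_power, lift_two]
  obtain ⟨e⟩ := hcard
  classical
  refine ⟨fun α => if h : α ∈ Iic (2 ^ μ : Cardinal).ord then Subtype.val '' e ⟨α, h⟩ else ∅,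
    ?_, ?_⟩
  · intro α hα β hβ hαβ
    simp only [dif_pos hα, dif_pos hβ] at hαβ
    exact congrArg Subtype.val (e.injective (image_injective.2 Subtype.val_injective hαβ))
  · intro α
    dsimp only
    split_ifs
    · rintro _ ⟨x, -, rfl⟩
      exact x.2
    · exact empty_subset _

noncomputable def powerCode (μ : Cardinal.{u}) : Ordinal.{u} → Set Ordinal.{u} :=
  if hμ : ℵ₀ ≤ μ then (exists_injOn_Iic_two_power hμ).choose else fun _ => ∅

theorem powerCode_injOn {μ : Cardinal.{u}} (hμ : ℵ₀ ≤ μ) :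
    InjOn (powerCode μ) (Iic (2 ^ μ : Cardinal).ord) := by
  rw [powerCode, dif_pos hμ]
  exact (exists_injOn_Iic_two_power hμ).choose_spec.1

theorem powerCode_subset_Iio {μ : Cardinal.{u}} (hμ : ℵ₀ ≤ μ) (α : Ordinal.{u}) :
    powerCode μ α ⊆ Iio μ.ord := by
  rw [powerCode, dif_pos hμ]
  exact (exists_injOn_Iic_two_power hμ).choose_spec.2 α

/-- The successor shift keeps the code of `α` apart from the limit `μ` and from the marker `0`. -/
def boundedCode (μ : Cardinal.{u}) (α : Ordinal.{u}) : Set Ordinal.{u} :=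
  insert 0 (insert μ.ord (succ '' powerCode μ α))

def IsBoundedCode (α : Ordinal.{u}) (A : Set Ordinal.{u}) : Prop :=
  ∃ μ : Cardinal.{u}, ℵ₀ ≤ μ ∧ μ.ord < α ∧ α ≤ (2 ^ μ : Cardinal).ord ∧ A = boundedCode μ α

theorem zero_mem_boundedCode (μ : Cardinal.{u}) (α : Ordinal.{u}) : 0 ∈ boundedCode μ α :=
  mem_insert _ _

theorem boundedCode_subset_Iio {μ : Cardinal.{u}} (hμ : ℵ₀ ≤ μ) {α : Ordinal.{u}}
    (hμα : μ.ord < α) (γ : Ordinal.{u}) : boundedCode μ γ ⊆ Iio α := by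
  rintro x (rfl | rfl | ⟨y, hy, rfl⟩)
  · exact pos_of_gt hμα
  · exact hμα
  · exact ((isSuccLimit_ord hμ).succ_lt (powerCode_subset_Iio hμ γ hy)).trans hμα

theorem IsBoundedCode.ne_inter_Iio {α β : Ordinal.{u}} {A B : Set Ordinal.{u}}
    (hA : IsBoundedCode α A) (hB : IsBoundedCode β B) (hαβ : α < β) : A ≠ B ∩ Iio α := by
  obtain ⟨μ, hμ, hμα, hαμ, rfl⟩ := hA
  obtain ⟨μ', -, -, hβμ', rfl⟩ := hB
  intro h
  have hlim := isSuccLimit_ord hμ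
  have hμμ' : μ = μ' := by
    have hmem : μ.ord ∈ boundedCode μ' β ∩ Iio α := h ▸ mem_insert_of_mem _ (mem_insert _ _)
    rcases hmem.1 with h0 | h1 | ⟨x, -, hx⟩
    · exact absurd h0 hlim.ne_bot
    · exact ord_injective h1
    · exact absurd hx (hlim.succ_ne x)
  subst hμμ'
  have h0 : ∀ γ, (0 : Ordinal) ∉ insert μ.ord (succ '' powerCode μ γ) := by
    rintro γ (h0 | ⟨x, -, hx⟩)
    · exact hlim.ne_bot h0.symm
    · exact (bot_lt_succ x).ne' hx
  have hμ_notMem : ∀ γ, μ.ord ∉ succ '' powerCode μ γ := fun γ ⟨x, _, hx⟩ => hlim.succ_ne x hx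
  have hcode := eq_inter_of_insert_eq_insert_inter (hμ_notMem α) (hμ_notMem β)
    (eq_inter_of_insert_eq_insert_inter (h0 α) (h0 β) h)
  rw [inter_eq_left.2 ((subset_insert _ _).trans ((subset_insert _ _).trans
    (boundedCode_subset_Iio hμ hμα β)))] at hcode
  exact hαβ.ne (powerCode_injOn hμ hαμ hβμ' (image_injective.2 succ_injective hcode))

/-- `T` is cofinal in `α` and has order type `cof α`, witnessed by its bounded parts being small. -/
structure IsThinCofinal (α : Ordinal.{u}) (T : Set Ordinal.{u}) : Prop where
  subset_Iio : T ⊆ Iio α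
  exists_le : ∀ γ < α, ∃ t ∈ T, γ ≤ t
  mk_inter_Iio_lt : ∀ γ < α, #(T ∩ Iio γ : Set Ordinal.{u}) < Cardinal.lift.{u + 1} α.cof

theorem lift_cof_le_mk_of_exists_le {α : Ordinal.{u}} {T : Set Ordinal.{u}} (hT : T ⊆ Iio α)
    (hcof : ∀ γ < α, ∃ t ∈ T, γ ≤ t) : Cardinal.lift.{u + 1} α.cof ≤ #T := by
  by_contra! hlt
  rw [lift_cof] at hlt
  obtain ⟨t, ht, hle⟩ := hcof _ (sSup_add_one_lt_of_lt_cof hlt hT)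
  have hbdd : BddAbove ((· + 1) '' T) :=
    ⟨α, by rintro _ ⟨s, hs, rfl⟩; exact add_one_le_iff.2 (hT hs)⟩
  exact (hle.trans_lt (lt_add_one t)).not_ge (le_csSup hbdd (mem_image_of_mem _ ht))

theorem exists_isThinCofinal (α : Ordinal.{u}) : ∃ T, IsThinCofinal α T := by
  obtain ⟨f, hf⟩ := exists_isFundamentalSeq (o := α) rfl
  refine ⟨range fun i => (f i).1, ?_, ?_, fun γ hγ => ?_⟩
  · rintro _ ⟨i, rfl⟩
    exact (f i).2
  · intro γ hγ
    obtain ⟨_, ⟨i, rfl⟩, hi⟩ := hf.isCofinal_range ⟨γ, hγ⟩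
    exact ⟨_, ⟨i, rfl⟩, hi⟩
  obtain ⟨_, ⟨i, rfl⟩, hi⟩ := hf.isCofinal_range ⟨γ, hγ⟩
  set g : Iio i.1 → Ordinal.{u} := fun j => (f ⟨j, (mem_Iio.1 j.2).trans i.2⟩).1
  have hsub : (range fun i => (f i).1) ∩ Iio γ ⊆ range g := by
    rintro _ ⟨⟨j, rfl⟩, hj⟩
    exact ⟨⟨j, hf.strictMono.lt_iff_lt.1 (hj.trans_le hi)⟩, rfl⟩
  calc #((range fun i => (f i).1) ∩ Iio γ : Set Ordinal.{u})
      ≤ #(range g) := mk_le_mk_of_subset hsub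
    _ ≤ #(Iio i.1) := mk_range_le
    _ = Cardinal.lift.{u + 1} i.1.card := Cardinal.mk_Iio_ordinal _
    _ < Cardinal.lift.{u + 1} α.cof := lift_lt.2 (Cardinal.lt_ord.1 i.2)

theorem IsThinCofinal.inter_Ioi {α ν : Ordinal.{u}} {T : Set Ordinal.{u}} (hT : IsThinCofinal α T)
    (hα : IsSuccLimit α) (hν : ν < α) : IsThinCofinal α (T ∩ Ioi ν) where
  subset_Iio := inter_subset_left.trans hT.subset_Iio
  exists_le γ hγ := by
    obtain ⟨t, ht, hle⟩ := hT.exists_le _ (hα.succ_lt (max_lt hγ hν))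
    have hlt := (lt_succ _).trans_le hle
    exact ⟨t, ⟨ht, (le_max_right _ _).trans_lt hlt⟩, (le_max_left _ _).trans hlt.le⟩
  mk_inter_Iio_lt γ hγ :=
    (mk_le_mk_of_subset (inter_subset_inter_left _ inter_subset_left)).trans_lt
      (hT.mk_inter_Iio_lt γ hγ)

def IsCofinalCode (α : Ordinal.{u}) (A : Set Ordinal.{u}) : Prop :=
  ∃ T, IsThinCofinal α T ∧ T ⊆ Ioi α.cof.ord ∧ A = insert α.cof.ord T

theorem exists_isCofinalCode {α : Ordinal.{u}} (hα : IsSuccLimit α) (hcof : α.cof.ord < α) :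
    ∃ A ⊆ Iio α, IsCofinalCode α A := by
  obtain ⟨T, hT⟩ := exists_isThinCofinal α
  exact ⟨_, insert_subset hcof (inter_subset_left.trans hT.subset_Iio),
    T ∩ Ioi α.cof.ord, hT.inter_Ioi hα hcof, inter_subset_right, rfl⟩

theorem IsCofinalCode.zero_notMem {α : Ordinal.{u}} {A : Set Ordinal.{u}} (hA : IsCofinalCode α A)
    (hα : α ≠ 0) : 0 ∉ A := by
  obtain ⟨T, -, hTν, rfl⟩ := hA
  rintro (h0 | h0)
  · exact hα (cof_eq_zero.1 (ord_eq_zero.1 h0.symm))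
  · exact not_lt_zero (mem_Ioi.1 (hTν h0))

theorem IsCofinalCode.ne_inter_Iio {α β : Ordinal.{u}} {A B : Set Ordinal.{u}}
    (hA : IsCofinalCode α A) (hB : IsCofinalCode β B) (hαβ : α < β) : A ≠ B ∩ Iio α := by
  obtain ⟨T, hT, hTν, rfl⟩ := hA
  obtain ⟨U, hU, hUν, rfl⟩ := hB
  intro h
  have hν : α.cof.ord = β.cof.ord :=
    IsLeast.eq_of_eq_inter_Iio
      ⟨mem_insert _ _, by rintro x (rfl | hx); exacts [le_rfl, (hTν hx).le]⟩
      ⟨mem_insert _ _, by rintro x (rfl | hx); exacts [le_rfl, (hUν hx).le]⟩ h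
  rw [hν] at h hTν
  have hTU : T = U ∩ Iio α :=
    eq_inter_of_insert_eq_insert_inter (fun h => (mem_Ioi.1 (hTν h)).false)
      (fun h => (mem_Ioi.1 (hUν h)).false) h
  have hlt := (lift_cof_le_mk_of_exists_le hT.subset_Iio hT.exists_le).trans_lt
    (hTU ▸ hU.mk_inter_Iio_lt α hαβ)
  rw [ord_injective hν] at hlt
  exact hlt.false

theorem exists_le_two_power_or_singular {α : Ordinal.{u}} (hω : ω < α)
    (hα : ¬ OrdInaccessible α) :
    (∃ μ : Cardinal.{u}, ℵ₀ ≤ μ ∧ μ.ord < α ∧ α ≤ (2 ^ μ : Cardinal).ord) ∨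
      (IsSuccLimit α ∧ α.cof.ord < α) := by
  have hℵ : ℵ₀ ≤ α.card := aleph0_le_card.2 hω.le
  by_cases hcard : α.card.ord = α
  swap
  · exact Or.inl ⟨α.card, hℵ, (ord_card_le α).lt_of_ne hcard,
      (lt_ord_succ_card α).le.trans (ord_le_ord.2 (succ_le_of_lt (cantor _)))⟩
  by_cases hreg : α.card.IsRegular
  · have hℵlt : ℵ₀ < α.card := by rwa [← ord_lt_ord, hcard, ord_aleph0]
    obtain ⟨c, hc, hle⟩ :=
      not_isStrongPrelimit_iff.1 fun h => hα ⟨hcard, hℵlt, hreg.le_cof_ord, h⟩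
    refine Or.inl ⟨max c ℵ₀, le_max_right _ _, ?_, ?_⟩
    · rw [← hcard, ord_lt_ord]
      exact max_lt hc hℵlt
    · rw [← hcard, ord_le_ord]
      exact hle.trans (power_le_power_left two_ne_zero (le_max_left _ _))
  · have hsing : α.cof < α.card := by
      by_contra! h
      exact hreg ⟨hℵ, by rwa [hcard]⟩
    refine Or.inr ⟨hcard ▸ isSuccLimit_ord hℵ, ?_⟩
    calc α.cof.ord < α.card.ord := ord_lt_ord.2 hsing
      _ = α := hcard

theorem exists_isBoundedCode_or_isCofinalCode {α : Ordinal.{u}} (hω : ω < α)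
    (hα : ¬ OrdInaccessible α) :
    ∃ A ⊆ Iio α, IsBoundedCode α A ∨ IsCofinalCode α A := by
  rcases exists_le_two_power_or_singular hω hα with ⟨μ, hμ, hμα, hαμ⟩ | ⟨hlim, hcof⟩
  · exact ⟨_, boundedCode_subset_Iio hμ hμα α, Or.inl ⟨μ, hμ, hμα, hαμ, rfl⟩⟩
  · obtain ⟨A, hA, hcode⟩ := exists_isCofinalCode hlim hcof
    exact ⟨A, hA, Or.inr hcode⟩

theorem ne_inter_Iio_of_codes {α β : Ordinal.{u}} {A B : Set Ordinal.{u}} (hα : α ≠ 0)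
    (hαβ : α < β) (hA : IsBoundedCode α A ∨ IsCofinalCode α A)
    (hB : IsBoundedCode β B ∨ IsCofinalCode β B) : A ≠ B ∩ Iio α := by
  rcases hA with hA | hA <;> rcases hB with hB | hB <;> intro h
  · exact hA.ne_inter_Iio hB hαβ h
  · obtain ⟨μ, -, -, -, rfl⟩ := hA
    exact hB.zero_notMem (pos_of_gt hαβ).ne' (h ▸ zero_mem_boundedCode μ α).1
  · obtain ⟨μ, -, -, -, rfl⟩ := hB
    exact hA.zero_notMem hα (h ▸ ⟨zero_mem_boundedCode μ β, pos_iff_ne_zero.2 hα⟩)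
  · exact hA.ne_inter_Iio hB hαβ h

theorem exists_list_forall_not_coherent :
    ∃ a : Ordinal.{u} → Set Ordinal.{u}, (∀ α, a α ⊆ Iio α) ∧
      ∀ α β, ω < α → α < β → ¬ OrdInaccessible α → ¬ OrdInaccessible β → a α ≠ a β ∩ Iio α := by
  have hcode : ∀ α : Ordinal.{u}, ∃ A ⊆ Iio α,
      ω < α → ¬ OrdInaccessible α → IsBoundedCode α A ∨ IsCofinalCode α A := by
    intro α
    by_cases h : ω < α ∧ ¬ OrdInaccessible α
    · obtain ⟨A, hA, hcases⟩ := exists_isBoundedCode_or_isCofinalCode h.1 h.2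
      exact ⟨A, hA, fun _ _ => hcases⟩
    · exact ⟨∅, empty_subset _, fun h₁ h₂ => absurd ⟨h₁, h₂⟩ h⟩
  choose a ha hcases using hcode
  exact ⟨a, ha, fun α β hω hαβ hα hβ => ne_inter_Iio_of_codes (omega0_pos.trans hω).ne' hαβ
    (hcases α hω hα) (hcases β (hω.trans hαβ) hβ)⟩

theorem not_subtle_setOf_not_ordInaccessible {κ : Ordinal} (hκ : RegUncountable κ)
    (S : Set Ordinal) : ¬ Subtle κ {α ∈ S | ¬ OrdInaccessible α} := by
  rintro ⟨-, hsubtle⟩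
  obtain ⟨a, ha, hcoh⟩ := exists_list_forall_not_coherent
  obtain ⟨α, ⟨⟨-, hα⟩, hαC⟩, β, ⟨⟨-, hβ⟩, -⟩, hαβ, h⟩ :=
    hsubtle a (fun α _ => ha α) _ (isClubIn_Ioo hκ.isSuccLimit hκ.omega0_lt)
  exact hcoh α β hαC.1 hαβ hα hβ h

/-- The inaccessible cardinals below `κ` lie in the subtle filter: for subtle `S`,
the non-inaccessible part of `S` is not subtle, and `S` contains an inaccessible. -/
theorem subtle_inaccessibles (κ : Ordinal) (hκ : RegUncountable κ)
    (S : Set Ordinal) (hS : Subtle κ S) :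
    ¬ Subtle κ {α ∈ S | ¬ OrdInaccessible α} ∧ ∃ α ∈ S, OrdInaccessible α := by
  refine ⟨not_subtle_setOf_not_ordInaccessible hκ S, ?_⟩
  by_contra! h
  rw [← sep_eq_self_iff_mem_true.2 h] at hS
  exact not_subtle_setOf_not_ordInaccessible hκ S hS
end

section
/- Regressive functions can be absorbed into lists via Gödel pairing: let κ be regular uncountable, A ⊆ κ a set of ordinals closed under the Gödel pairing function, f : A → κ regressive, and for each α < κ let ⟨a^α_β : β ∈ f⁻¹(α)⟩ be an f⁻¹(α)-list. Define the A-list ⟨a_β : β ∈ A⟩ where a_β ⊆ β codes the pair ({f(β)}, a^{f(β)}_β) via Gödel pairing. Then any set H ⊆ A homogeneous for ⟨a_β⟩ is homogeneous for f (f is constant on H, say with value α), and H is homogeneous for ⟨a^α_β : β ∈ f⁻¹(α)⟩. -/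
open Set

/-- Absorbing a regressive function and fiberwise lists into a single list via
Gödel pairing: any homogeneous set for the combined list is homogeneous for the
regressive function `f` (i.e. `f` is constant on it, say with value `c`) and
homogeneous for the fiber list `⟨a^c_β⟩`. -/
theorem homog_of_coded_list (κ : Ordinal) (hκ : RegUncountable κ)
    (A : Set Ordinal) (hA : A ⊆ Set.Iio κ)
    (Γ : Ordinal → Ordinal → Ordinal)
    (hΓinj : Function.Injective (fun p : Ordinal × Ordinal => Γ p.1 p.2))
    (hΓclosed : ∀ β ∈ A, ∀ x < β, ∀ y < β, Γ x y < β)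
    (hone : ∀ β ∈ A, (1 : Ordinal) < β)
    (f : Ordinal → Ordinal) (hf : ∀ β ∈ A, f β < β)
    (aα : Ordinal → Ordinal → Set Ordinal)
    (haα : ∀ β ∈ A, aα (f β) β ⊆ Set.Iio β)
    (a : Ordinal → Set Ordinal)
    (ha : ∀ β ∈ A, a β = insert (Γ 0 (f β)) ((Γ 1) '' (aα (f β) β))) :
    ∀ H, H ⊆ A → Homog a H →
      ∃ c, (∀ β ∈ H, f β = c) ∧ Homog (aα c) H := by

  intro H hH hhom
  -- Γ 0 x ≠ Γ 1 y
  have hne : ∀ x y : Ordinal, Γ 0 x ≠ Γ 1 y := by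
    intro x y h
    have := hΓinj (a₁ := (0, x)) (a₂ := (1, y)) h
    simpa using congrArg Prod.fst this
  have hΓ1inj : ∀ x y : Ordinal, Γ 1 x = Γ 1 y → x = y := by
    intro x y h
    have := hΓinj (a₁ := (1, x)) (a₂ := (1, y)) h
    simpa using congrArg Prod.snd this
  -- step: for α < β in H, f α = f β
  have hstep : ∀ α ∈ H, ∀ β ∈ H, α < β → f α = f β := by
    intro α hα β hβ hlt
    have hmem : Γ 0 (f α) ∈ a β ∩ Set.Iio α := by
      rw [← hhom α hα β hβ hlt, ha α (hH hα)]
      exact Set.mem_insert _ _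
    rw [ha β (hH hβ)] at hmem
    rcases hmem.1 with h | ⟨y, _, hy⟩
    · have := hΓinj (a₁ := ((0:Ordinal), f α)) (a₂ := (0, f β)) h
      simpa using congrArg Prod.snd this
    · exact absurd hy.symm (hne _ _)
  have hconst : ∀ α ∈ H, ∀ β ∈ H, f α = f β := by
    intro α hα β hβ
    rcases lt_trichotomy α β with h | h | h
    · exact hstep α hα β hβ h
    · rw [h]
    · exact (hstep β hβ α hα h).symm
  by_cases hne' : H.Nonempty
  · obtain ⟨β₀, hβ₀⟩ := hne'
    refine ⟨f β₀, fun β hβ => hconst β hβ β₀ hβ₀, ?_⟩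
    intro α hα β hβ hlt
    have hfα : f α = f β₀ := hconst α hα β₀ hβ₀
    have hfβ : f β = f β₀ := hconst β hβ β₀ hβ₀
    have key : a α = a β ∩ Set.Iio α := hhom α hα β hβ hlt
    ext x
    constructor
    · intro hx
      rw [← hfα] at hx
      have hxα : x < α := haα α (hH hα) hx
      have hmem : Γ 1 x ∈ a β ∩ Set.Iio α := by
        rw [← key, ha α (hH hα)]
        exact Set.mem_insert_of_mem _ ⟨x, hx, rfl⟩
      rw [ha β (hH hβ)] at hmem
      rcases hmem.1 with h | ⟨y, hy, hyeq⟩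
      · exact absurd h.symm (hne _ _)
      · have := hΓ1inj y x hyeq
        rw [← hfβ]
        exact ⟨this ▸ hy, hxα⟩
    · rintro ⟨hx, hxα⟩
      rw [← hfβ] at hx
      have hΓlt : Γ 1 x < α := hΓclosed α (hH hα) 1 (hone α (hH hα)) x hxα
      have hmem : Γ 1 x ∈ a α := by
        rw [key]
        exact ⟨by rw [ha β (hH hβ)]; exact Set.mem_insert_of_mem _ ⟨x, hx, rfl⟩, hΓlt⟩
      rw [ha α (hH hα)] at hmem
      rcases hmem with h | ⟨y, hy, hyeq⟩
      · exact absurd h.symm (hne _ _)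
      · have := hΓ1inj y x hyeq
        rw [← hfα]
        exact this ▸ hy
  · push_neg at hne'
    subst hne'
    exact ⟨0, fun β h => absurd h (Set.notMem_empty β), fun α h => absurd h (Set.notMem_empty α)⟩
end
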